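/- The map φ(r) = r/(1 + 2|r|) is a diffeomorphism from ℝ² \ {0} onto the punctured open disk {0 < |w| < 1/2}, and it sends each curve {a x + b y − c√(x²+y²) = 1, c > 0} (a branch of a Kepler hyperbola of energy E = (a²+b²−c²)/(2c) with suitable sign conventions) into a curve of the form a' x + b' y + c'√(x²+y²) = 1 with (a',b',c') = (a, b, 2 − c). -/

import Mathlib

/-- The norm `√(x²+y²)` on `ℝ²`. -/
noncomputable def nrm (p : ℝ × ℝ) : ℝ := Real.sqrt (p.1 ^ 2 + p.2 ^ 2)

/-- The map `φ(r) = r/(1 + 2|r|)`. -/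
noncomputable def phiMap (p : ℝ × ℝ) : ℝ × ℝ := (1 + 2 * nrm p)⁻¹ • p

noncomputable def psiMap (p : ℝ × ℝ) : ℝ × ℝ := (1 - 2 * nrm p)⁻¹ • p

lemma nrm_nonneg (p : ℝ × ℝ) : 0 ≤ nrm p := Real.sqrt_nonneg _

lemma nrm_pos {p : ℝ × ℝ} (h : p ≠ 0) : 0 < nrm p := by
  apply Real.sqrt_pos.2
  have : p.1 ≠ 0 ∨ p.2 ≠ 0 := by
    by_contra hc
    push_neg at hc
    exact h (Prod.ext hc.1 hc.2)
  rcases this with h1 | h2 <;> positivity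

lemma nrm_ne_zero_iff {p : ℝ × ℝ} : p ≠ 0 → nrm p ≠ 0 := fun h => (nrm_pos h).ne'

lemma nrm_smul (t : ℝ) (p : ℝ × ℝ) : nrm (t • p) = |t| * nrm p := by
  unfold nrm
  have : (t • p).1 ^ 2 + (t • p).2 ^ 2 = t ^ 2 * (p.1 ^ 2 + p.2 ^ 2) := by
    simp [Prod.smul_def]; ring
  rw [this, Real.sqrt_mul (sq_nonneg t), Real.sqrt_sq_eq_abs]

lemma ne_zero_of_nrm_pos {w : ℝ × ℝ} (h : 0 < nrm w) : w ≠ 0 := by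
  rintro rfl
  simp [nrm] at h

lemma contDiffAt_nrm {p : ℝ × ℝ} (h : p ≠ 0) : ContDiffAt ℝ (⊤ : ℕ∞) nrm p := by
  have h1 : p.1 ^ 2 + p.2 ^ 2 ≠ 0 := by
    have := nrm_pos h
    intro hc
    simp [nrm, hc] at this
  exact (Real.contDiffAt_sqrt h1).comp p
    (((contDiff_fst.pow 2).add (contDiff_snd.pow 2)).contDiffAt)

lemma nrm_phiMap {p : ℝ × ℝ} (h : p ≠ 0) :
    nrm (phiMap p) = (1 + 2 * nrm p)⁻¹ * nrm p := by
  have hn := nrm_pos h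
  have hpos : (0:ℝ) < 1 + 2 * nrm p := by linarith
  rw [phiMap, nrm_smul, abs_of_pos (inv_pos.2 hpos)]

theorem hyperbolic_to_elliptic_embedding :
    (Set.BijOn phiMap {p : ℝ × ℝ | p ≠ 0}
        {w : ℝ × ℝ | 0 < nrm w ∧ nrm w < 1 / 2} ∧
      ContDiffOn ℝ (⊤ : ℕ∞) phiMap {p : ℝ × ℝ | p ≠ 0} ∧
      ∃ ψ : ℝ × ℝ → ℝ × ℝ,
        ContDiffOn ℝ (⊤ : ℕ∞) ψ {w : ℝ × ℝ | 0 < nrm w ∧ nrm w < 1 / 2} ∧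
        (∀ p : ℝ × ℝ, p ≠ 0 → ψ (phiMap p) = p) ∧
        (∀ w : ℝ × ℝ, 0 < nrm w ∧ nrm w < 1 / 2 → phiMap (ψ w) = w)) ∧
    (∀ a b c : ℝ, 0 < c → ∀ p : ℝ × ℝ, p ≠ 0 →
      a * p.1 + b * p.2 - c * nrm p = 1 →
      a * (phiMap p).1 + b * (phiMap p).2 + (2 - c) * nrm (phiMap p) = 1) := by
  -- basic facts
  have hmaps : ∀ p : ℝ × ℝ, p ≠ 0 → 0 < nrm (phiMap p) ∧ nrm (phiMap p) < 1 / 2 := by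
    intro p hp
    have hn := nrm_pos hp
    have hpos : (0:ℝ) < 1 + 2 * nrm p := by linarith
    rw [nrm_phiMap hp]
    constructor
    · positivity
    · rw [inv_mul_lt_iff₀ hpos]
      linarith
  have hleft : ∀ p : ℝ × ℝ, p ≠ 0 → psiMap (phiMap p) = p := by
    intro p hp
    have hn := nrm_pos hp
    have hpos : (0:ℝ) < 1 + 2 * nrm p := by linarith
    rw [psiMap, nrm_phiMap hp]
    have key : 1 - 2 * ((1 + 2 * nrm p)⁻¹ * nrm p) = (1 + 2 * nrm p)⁻¹ := by
      field_simp
      ring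
    rw [key, phiMap, smul_smul, inv_inv, mul_inv_cancel₀ hpos.ne', one_smul]
  have hnrm_psi : ∀ w : ℝ × ℝ, 0 < nrm w → nrm w < 1 / 2 →
      nrm (psiMap w) = (1 - 2 * nrm w)⁻¹ * nrm w := by
    intro w h1 h2
    have hpos : (0:ℝ) < 1 - 2 * nrm w := by linarith
    rw [psiMap, nrm_smul, abs_of_pos (inv_pos.2 hpos)]
  have hmaps' : ∀ w : ℝ × ℝ, 0 < nrm w ∧ nrm w < 1 / 2 → psiMap w ≠ 0 := by
    intro w ⟨h1, h2⟩
    have hpos : (0:ℝ) < 1 - 2 * nrm w := by linarith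
    exact smul_ne_zero (inv_pos.2 hpos).ne' (ne_zero_of_nrm_pos h1)
  have hright : ∀ w : ℝ × ℝ, 0 < nrm w ∧ nrm w < 1 / 2 → phiMap (psiMap w) = w := by
    intro w ⟨h1, h2⟩
    have hpos : (0:ℝ) < 1 - 2 * nrm w := by linarith
    rw [phiMap, hnrm_psi w h1 h2]
    have key : 1 + 2 * ((1 - 2 * nrm w)⁻¹ * nrm w) = (1 - 2 * nrm w)⁻¹ := by
      field_simp
      ring
    rw [key, psiMap, smul_smul, inv_inv, mul_inv_cancel₀ hpos.ne', one_smul]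
  refine ⟨⟨?_, ?_, psiMap, ?_, hleft, hright⟩, ?_⟩
  · -- BijOn
    refine Set.InvOn.bijOn ⟨fun p hp => hleft p hp, fun w hw => hright w hw⟩
      (fun p hp => hmaps p hp) (fun w hw => hmaps' w hw)
  · -- smoothness of phiMap
    intro p hp
    have hn := nrm_pos hp
    have hpos : (0:ℝ) < 1 + 2 * nrm p := by linarith
    exact (((contDiffAt_const.add (contDiffAt_const.mul (contDiffAt_nrm hp))).inv
      hpos.ne').smul contDiffAt_id).contDiffWithinAt
  · -- smoothness of psiMap
    intro w hw
    obtain ⟨h1, h2⟩ := hw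
    have hpos : (0:ℝ) < 1 - 2 * nrm w := by linarith
    exact (((contDiffAt_const.sub (contDiffAt_const.mul
      (contDiffAt_nrm (ne_zero_of_nrm_pos h1)))).inv hpos.ne').smul
      contDiffAt_id).contDiffWithinAt
  · -- the curve map
    intro a b c hc p hp heq
    have hn := nrm_pos hp
    have hpos : (0:ℝ) < 1 + 2 * nrm p := by linarith
    rw [nrm_phiMap hp]
    have h1 : (phiMap p).1 = (1 + 2 * nrm p)⁻¹ * p.1 := rfl
    have h2 : (phiMap p).2 = (1 + 2 * nrm p)⁻¹ * p.2 := rfl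
    rw [h1, h2]
    field_simp
    nlinarith [heq]
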